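/- arXiv:1212.1522 — 2 statements merged into one kernel-verified Lean document; each statement's English description precedes it below -/
import Mathlib

section
/- Fix ε with 0 ≤ ε < 1 and a player i. Let x* be a feasible allocation maximizing Π_k v_k(x_k)^{b_k} and x*_{-i} a feasible allocation maximizing Π_{k≠i} v_k(x_k)^{b_k}; assume each v_k is concave, all the values v_k(x*_k), v_k((x*_{-i})_k) (k ≠ i) are positive, and v_i(0) = 0. Let x̃ be any feasible allocation with Π_k v_k(x̃_k)^{b_k} ≥ (1−ε)·Π_k v_k(x*_k)^{b_k}, and let x̃_{-i} be any feasible allocation with Π_{k≠i} v_k((x̃_{-i})_k)^{b_k} > 0, and define f̃_i = min{1, (Π_{k≠i} v_k(x̃_k)^{b_k} / Π_{k≠i} v_k((x̃_{-i})_k)^{b_k})^{1/b_i}}. Then, with B_{-i} = Σ_{k≠i} b_k, the adapted Partial Allocation mechanism guarantees f̃_i·v_i(x̃_i) ≥ (1−ε)·(1 + b_i/B_{-i})^{-B_{-i}/b_i}·v_i(x*_i). -/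
/-!
Differentiating the log of the Nash welfare `∏ v_k^{b_k}` at its maximiser `x*` along the segment
towards another feasible allocation `y` gives, by concavity, the first-order condition
`∑_k b_k v_k(y_k) / v_k(x*_k) ≤ ∑_k b_k`. Taking for `y` the allocation `x*_{-i}` with player `i`'s
bundle emptied and applying weighted AM-GM shows that the others' welfare under `x*_{-i}` is at
most `(1 + b_i/B_{-i})^{B_{-i}}` times their welfare under `x*`. Since `x*_{-i}` also dominates the
others' welfare under `x̃` and `x̃_{-i}`, we get `f̃_i^{b_i}` at least the ratio of the others'
welfare under `x̃` and under `x*_{-i}`; together with `1 - ε ≤ (1 - ε)^{1/b_i}` this gives the bound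
after taking `b_i`-th powers.
-/

open Finset Topology

theorem HasDerivAt.nonpos_of_eventually_le_right {f : ℝ → ℝ} {f' a : ℝ} (hf : HasDerivAt f f' a)
    (h : ∀ᶠ t in 𝓝[>] a, f t ≤ f a) : f' ≤ 0 := by
  refine le_of_tendsto ((hasDerivAt_iff_tendsto_slope.1 hf).mono_left (nhdsGT_le_nhdsNE a)) ?_
  filter_upwards [h, self_mem_nhdsWithin] with t hft (hat : a < t)
  rw [slope_def_field]
  exact div_nonpos_of_nonpos_of_nonneg (sub_nonpos.2 hft) (sub_pos.2 hat).le

theorem sum_mul_div_le_sum_of_prod_rpow_le {ι : Type*} (s : Finset ι) {b p q : ι → ℝ}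
    (hp : ∀ k ∈ s, 0 < p k) (hq : ∀ k ∈ s, 0 ≤ q k)
    (h : ∀ t ∈ Set.Ioo (0 : ℝ) 1, ∏ k ∈ s, ((1 - t) * p k + t * q k) ^ b k ≤ ∏ k ∈ s, p k ^ b k) :
    ∑ k ∈ s, b k * (q k / p k) ≤ ∑ k ∈ s, b k := by
  have hpos : ∀ t ∈ Set.Ico (0 : ℝ) 1, ∀ k ∈ s, 0 < (1 - t) * p k + t * q k := fun t ht k hk =>
    add_pos_of_pos_of_nonneg (mul_pos (by linarith [ht.2]) (hp k hk)) (mul_nonneg ht.1 (hq k hk))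
  let g : ℝ → ℝ := fun t => ∑ k ∈ s, b k * Real.log (p k + t * (q k - p k))
  have hg_log : ∀ t ∈ Set.Ico (0 : ℝ) 1,
      g t = Real.log (∏ k ∈ s, ((1 - t) * p k + t * q k) ^ b k) := fun t ht => by
    rw [Real.log_prod fun k hk => (Real.rpow_pos_of_pos (hpos t ht k hk) _).ne']
    refine sum_congr rfl fun k hk => ?_
    rw [Real.log_rpow (hpos t ht k hk)]
    ring_nf
  have hg : HasDerivAt g (∑ k ∈ s, b k * ((q k - p k) / p k)) 0 := by
    refine HasDerivAt.fun_sum fun k hk => HasDerivAt.const_mul _ ?_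
    simpa using ((hasDerivAt_mul_const (x := 0) (q k - p k)).const_add (p k)).log
      (by simpa using (hp k hk).ne')
  have hle : ∀ᶠ t in 𝓝[>] 0, g t ≤ g 0 := by
    filter_upwards [Ioo_mem_nhdsGT (zero_lt_one' ℝ)] with t ht
    rw [hg_log t ⟨ht.1.le, ht.2⟩, hg_log 0 ⟨le_rfl, one_pos⟩]
    exact Real.log_le_log (prod_pos fun k hk => Real.rpow_pos_of_pos
      (hpos t ⟨ht.1.le, ht.2⟩ k hk) _) (by simpa using h t ht)
  have hderiv := hg.nonpos_of_eventually_le_right hle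
  have hsplit : ∀ k ∈ s, b k * ((q k - p k) / p k) = b k * (q k / p k) - b k := fun k hk => by
    field_simp [(hp k hk).ne']
  rw [sum_congr rfl hsplit, sum_sub_distrib] at hderiv
  linarith

theorem prod_rpow_le_rpow_sum_of_sum_mul_le {ι : Type*} {s : Finset ι} {w z : ι → ℝ} {c : ℝ}
    (hw : ∀ k ∈ s, 0 ≤ w k) (hW : 0 < ∑ k ∈ s, w k) (hz : ∀ k ∈ s, 0 ≤ z k)
    (h : ∑ k ∈ s, w k * z k ≤ c * ∑ k ∈ s, w k) :
    ∏ k ∈ s, z k ^ w k ≤ c ^ ∑ k ∈ s, w k := by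
  have hmean : (∑ k ∈ s, w k * z k) / ∑ k ∈ s, w k ≤ c := (div_le_iff₀ hW).2 h
  have hgm := (Real.geom_mean_le_arith_mean s w z hw hW hz).trans hmean
  rwa [Real.rpow_inv_le_iff_of_pos (prod_nonneg fun k hk => Real.rpow_nonneg (hz k hk) _)
    ((div_nonneg (sum_nonneg fun k hk => mul_nonneg (hw k hk) (hz k hk)) hW.le).trans hmean)
    hW] at hgm

section Allocation

variable {ι κ : Type*} [Fintype ι]

def IsFeasibleAllocation (x : ι → κ → ℝ) : Prop :=
  (∀ k j, 0 ≤ x k j) ∧ ∀ j, ∑ k, x k j ≤ 1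

theorem convex_setOf_isFeasibleAllocation :
    Convex ℝ {x : ι → κ → ℝ | IsFeasibleAllocation x} := by
  rintro x ⟨hx_nonneg, hx_sum⟩ y ⟨hy_nonneg, hy_sum⟩ s t hs ht hst
  refine ⟨fun k j => ?_, fun j => ?_⟩
  · simp only [Pi.add_apply, Pi.smul_apply, smul_eq_mul]
    exact add_nonneg (mul_nonneg hs (hx_nonneg k j)) (mul_nonneg ht (hy_nonneg k j))
  · simp only [Pi.add_apply, Pi.smul_apply, smul_eq_mul, sum_add_distrib, ← mul_sum]
    nlinarith [hx_sum j, hy_sum j]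

theorem IsFeasibleAllocation.update_zero [DecidableEq ι] {x : ι → κ → ℝ}
    (hx : IsFeasibleAllocation x) (i : ι) : IsFeasibleAllocation (Function.update x i 0) := by
  have hle : ∀ k j, Function.update x i 0 k j ≤ x k j := fun k j => by
    rcases eq_or_ne k i with rfl | hk
    · simpa using hx.1 k j
    · simp [hk]
  refine ⟨fun k j => ?_, fun j => (sum_le_sum fun k _ => hle k j).trans (hx.2 j)⟩
  rcases eq_or_ne k i with rfl | hk
  · simp
  · simpa [hk] using hx.1 k j

variable {v : ι → (κ → ℝ) → ℝ} {b : ι → ℝ} {xstar y : ι → κ → ℝ}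

theorem sum_mul_div_le_sum_of_isMaxOn (hb : ∀ k, 0 ≤ b k)
    (hv : ∀ k, ConcaveOn ℝ Set.univ (v k)) (hxstar : IsFeasibleAllocation xstar)
    (hmax : IsMaxOn (fun x => ∏ k, v k (x k) ^ b k) {x | IsFeasibleAllocation x} xstar)
    (hpos : ∀ k, 0 < v k (xstar k)) (hy : IsFeasibleAllocation y) (hvy : ∀ k, 0 ≤ v k (y k)) :
    ∑ k, b k * (v k (y k) / v k (xstar k)) ≤ ∑ k, b k := by
  refine sum_mul_div_le_sum_of_prod_rpow_le _ (fun k _ => hpos k) (fun k _ => hvy k) ?_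
  intro t ht
  have hcomb : ∀ k, 0 ≤ (1 - t) * v k (xstar k) + t * v k (y k) := fun k =>
    add_nonneg (mul_nonneg (sub_nonneg.2 ht.2.le) (hpos k).le) (mul_nonneg ht.1.le (hvy k))
  refine le_trans ?_ (hmax (convex_setOf_isFeasibleAllocation hxstar hy
    (sub_nonneg.2 ht.2.le) ht.1.le (sub_add_cancel 1 t)))
  refine prod_le_prod (fun k _ => Real.rpow_nonneg (hcomb k) _)
    fun k _ => Real.rpow_le_rpow (hcomb k) ?_ (hb k)
  simpa [smul_eq_mul] using (hv k).2 (Set.mem_univ (xstar k)) (Set.mem_univ (y k))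
    (sub_nonneg.2 ht.2.le) ht.1.le (sub_add_cancel 1 t)

theorem prod_erase_rpow_le_of_isMaxOn [DecidableEq ι] (hb : ∀ k, 0 ≤ b k)
    (hv : ∀ k, ConcaveOn ℝ Set.univ (v k)) {i : ι} (hvi : v i 0 = 0)
    (hB : 0 < ∑ k ∈ univ.erase i, b k) (hxstar : IsFeasibleAllocation xstar)
    (hmax : IsMaxOn (fun x => ∏ k, v k (x k) ^ b k) {x | IsFeasibleAllocation x} xstar)
    (hpos : ∀ k, 0 < v k (xstar k)) (hy : IsFeasibleAllocation y) (hvy : ∀ k, 0 ≤ v k (y k)) :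
    ∏ k ∈ univ.erase i, v k (y k) ^ b k ≤
      (1 + b i / ∑ k ∈ univ.erase i, b k) ^ (∑ k ∈ univ.erase i, b k) *
        ∏ k ∈ univ.erase i, v k (xstar k) ^ b k := by
  set B := ∑ k ∈ univ.erase i, b k
  have hsum : ∑ k ∈ univ.erase i, b k * (v k (y k) / v k (xstar k)) ≤ (1 + b i / B) * B := by
    have hkkt := sum_mul_div_le_sum_of_isMaxOn hb hv hxstar hmax hpos (hy.update_zero i)
      fun k => by rcases eq_or_ne k i with rfl | hk <;> simp [*]
    rw [← add_sum_erase _ _ (mem_univ i), ← add_sum_erase _ _ (mem_univ i)] at hkkt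
    simp only [Function.update_self, hvi, zero_div, mul_zero, zero_add] at hkkt
    rw [sum_congr rfl fun k hk => by rw [Function.update_of_ne (ne_of_mem_erase hk)]] at hkkt
    rw [add_mul, div_mul_cancel₀ _ hB.ne']
    linarith
  have hamgm := prod_rpow_le_rpow_sum_of_sum_mul_le (fun k _ => hb k) hB
    (fun k _ => div_nonneg (hvy k) (hpos k).le) hsum
  rwa [prod_congr rfl fun k _ => Real.div_rpow (hvy k) (hpos k).le (b k), prod_div_distrib,
    div_le_iff₀ (prod_pos fun k _ => Real.rpow_pos_of_pos (hpos k) _)] at hamgm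

end Allocation

theorem div_le_min_one_rpow_rpow {N D P β : ℝ} (hN : 0 ≤ N) (hNP : N ≤ P) (hD : 0 < D)
    (hDP : D ≤ P) (hβ : 0 < β) : N / P ≤ min 1 ((N / D) ^ (1 / β)) ^ β := by
  rcases le_total 1 ((N / D) ^ (1 / β)) with h | h
  · rw [min_eq_left h, Real.one_rpow]
    exact div_le_one_of_le₀ hNP (hD.le.trans hDP)
  · rw [min_eq_right h, ← Real.rpow_mul (div_nonneg hN hD.le), one_div_mul_cancel hβ.ne',
      Real.rpow_one]
    exact div_le_div_of_nonneg_left hN hD hDP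

theorem mul_le_of_mul_rpow_le_rpow {δ a y β : ℝ} (hδ0 : 0 ≤ δ) (hδ1 : δ ≤ 1) (hβ : 1 ≤ β)
    (ha : 0 ≤ a) (hy : 0 ≤ y) (h : δ * a ^ β ≤ y ^ β) : δ * a ≤ y := by
  rw [← Real.rpow_le_rpow_iff (mul_nonneg hδ0 ha) hy (zero_lt_one.trans_le hβ),
    Real.mul_rpow hδ0 ha]
  exact (mul_le_mul_of_nonneg_right (Real.rpow_le_self_of_le_one hδ0 hδ1 hβ)
    (Real.rpow_nonneg ha _)).trans h

theorem stmt_11_general {n m : ℕ} (hn : 2 ≤ n) (i : Fin n)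
    (ε : ℝ) (hε0 : 0 ≤ ε) (hε1 : ε < 1)
    (v : Fin n → (Fin m → ℝ) → ℝ) (b : Fin n → ℝ)
    (hb : ∀ k, 1 ≤ b k)
    (hv_nonneg : ∀ k (y : Fin m → ℝ), (∀ j, 0 ≤ y j) → 0 ≤ v k y)
    (hv_concave : ∀ k, ConcaveOn ℝ Set.univ (v k))
    (hvi_zero : v i 0 = 0)
    -- the exact PF allocations
    (xstar : Fin n → Fin m → ℝ)
    (hxstar_nonneg : ∀ k j, 0 ≤ xstar k j) (hxstar_feas : ∀ j, ∑ k, xstar k j ≤ 1)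
    (hxstar_max : ∀ x : Fin n → Fin m → ℝ,
      (∀ k j, 0 ≤ x k j) → (∀ j, ∑ k, x k j ≤ 1) →
      ∏ k, v k (x k) ^ b k ≤ ∏ k, v k (xstar k) ^ b k)
    (xmi : Fin n → Fin m → ℝ)
    (hxmi_nonneg : ∀ k j, 0 ≤ xmi k j) (hxmi_feas : ∀ j, ∑ k, xmi k j ≤ 1)
    (hxmi_max : ∀ x : Fin n → Fin m → ℝ,
      (∀ k j, 0 ≤ x k j) → (∀ j, ∑ k, x k j ≤ 1) →
      ∏ k ∈ univ.erase i, v k (x k) ^ b k ≤ ∏ k ∈ univ.erase i, v k (xmi k) ^ b k)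
    (hpos : ∀ k, 0 < v k (xstar k))
    -- the approximate PF allocations used by the adapted mechanism
    (xt : Fin n → Fin m → ℝ)
    (hxt_nonneg : ∀ k j, 0 ≤ xt k j) (hxt_feas : ∀ j, ∑ k, xt k j ≤ 1)
    (hxt_approx : (1 - ε) * ∏ k, v k (xstar k) ^ b k ≤ ∏ k, v k (xt k) ^ b k)
    (xtmi : Fin n → Fin m → ℝ)
    (hxtmi_nonneg : ∀ k j, 0 ≤ xtmi k j) (hxtmi_feas : ∀ j, ∑ k, xtmi k j ≤ 1)
    (hxtmi_pos : 0 < ∏ k ∈ univ.erase i, v k (xtmi k) ^ b k) :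
    (1 - ε) * ((1 + b i / ∑ k ∈ univ.erase i, b k)
        ^ (-((∑ k ∈ univ.erase i, b k) / b i))) * v i (xstar i)
      ≤ (min 1 (((∏ k ∈ univ.erase i, v k (xt k) ^ b k) /
          (∏ k ∈ univ.erase i, v k (xtmi k) ^ b k)) ^ (1 / b i))) * v i (xt i) := by
  set B := ∑ k ∈ univ.erase i, b k
  set N := ∏ k ∈ univ.erase i, v k (xt k) ^ b k
  set D := ∏ k ∈ univ.erase i, v k (xtmi k) ^ b k
  set P := ∏ k ∈ univ.erase i, v k (xmi k) ^ b k
  set Q := ∏ k ∈ univ.erase i, v k (xstar k) ^ b k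
  set f := min 1 ((N / D) ^ (1 / b i))
  have hbi : 0 < b i := zero_lt_one.trans_le (hb i)
  have hB : 0 < B := sum_pos (fun k _ => zero_lt_one.trans_le (hb k))
    (univ_nontrivial_iff.2 (Fin.nontrivial_iff_two_le.2 hn)).erase_nonempty
  have hc : 0 < 1 + b i / B := by positivity
  have hQ : 0 < Q := prod_pos fun k _ => Real.rpow_pos_of_pos (hpos k) _
  have hN : 0 ≤ N := prod_nonneg fun k _ => Real.rpow_nonneg (hv_nonneg k _ (hxt_nonneg k)) _
  have hDP : D ≤ P := hxmi_max xtmi hxtmi_nonneg hxtmi_feas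
  have hPQ : P ≤ (1 + b i / B) ^ B * Q :=
    prod_erase_rpow_le_of_isMaxOn (fun k => zero_le_one.trans (hb k)) hv_concave hvi_zero hB
      ⟨hxstar_nonneg, hxstar_feas⟩ (isMaxOn_iff.2 fun x hx => hxstar_max x hx.1 hx.2) hpos
      ⟨hxmi_nonneg, hxmi_feas⟩ fun k => hv_nonneg k _ (hxmi_nonneg k)
  have hf : N / P ≤ f ^ b i :=
    div_le_min_one_rpow_rpow hN (hxmi_max xt hxt_nonneg hxt_feas) hxtmi_pos hDP hbi
  have hf0 : 0 ≤ f := le_min zero_le_one (Real.rpow_nonneg (div_nonneg hN hxtmi_pos.le) _)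
  have hvi : 0 ≤ v i (xt i) := hv_nonneg i _ (hxt_nonneg i)
  rw [← mul_prod_erase _ _ (mem_univ i), ← mul_prod_erase _ _ (mem_univ i)] at hxt_approx
  rw [mul_assoc]
  refine mul_le_of_mul_rpow_le_rpow (by linarith) (by linarith) (hb i)
    (mul_nonneg (Real.rpow_nonneg hc.le _) (hpos i).le) (mul_nonneg hf0 hvi) ?_
  calc (1 - ε) * ((1 + b i / B) ^ (-(B / b i)) * v i (xstar i)) ^ b i
      = (1 - ε) * (v i (xstar i) ^ b i * Q) / ((1 + b i / B) ^ B * Q) := by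
        rw [Real.mul_rpow (Real.rpow_nonneg hc.le _) (hpos i).le, ← Real.rpow_mul hc.le,
          neg_mul, div_mul_cancel₀ _ hbi.ne', Real.rpow_neg hc.le]
        field_simp
    _ ≤ v i (xt i) ^ b i * N / P :=
        div_le_div₀ (by positivity) hxt_approx (hxtmi_pos.trans_le hDP) hPQ
    _ = N / P * v i (xt i) ^ b i := by ring
    _ ≤ f ^ b i * v i (xt i) ^ b i := by gcongr
    _ = (f * v i (xt i)) ^ b i := (Real.mul_rpow hf0 hvi).symm

/-- robustness of the approximation. When the Partial Allocation mechanism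
uses `(1−ε)`-approximate Proportionally Fair allocations, every player still receives at least
`(1−ε)·(1 + b_i/B_{-i})^{-B_{-i}/b_i}` times her Proportionally Fair value. -/
theorem stmt_11 {n m : ℕ} (hn : 2 ≤ n) (i : Fin n)
    (ε : ℝ) (hε0 : 0 ≤ ε) (hε1 : ε < 1)
    (v : Fin n → (Fin m → ℝ) → ℝ) (b : Fin n → ℝ)
    (hb : ∀ k, 1 ≤ b k)
    (hv_nonneg : ∀ k (y : Fin m → ℝ), (∀ j, 0 ≤ y j) → 0 ≤ v k y)
    (hv_hom : ∀ k (c : ℝ), 0 ≤ c → ∀ y : Fin m → ℝ, v k (c • y) = c * v k y)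
    (hv_concave : ∀ k, ConcaveOn ℝ Set.univ (v k))
    (hvi_zero : v i 0 = 0)
    -- the exact PF allocations
    (xstar : Fin n → Fin m → ℝ)
    (hxstar_nonneg : ∀ k j, 0 ≤ xstar k j) (hxstar_feas : ∀ j, ∑ k, xstar k j ≤ 1)
    (hxstar_max : ∀ x : Fin n → Fin m → ℝ,
      (∀ k j, 0 ≤ x k j) → (∀ j, ∑ k, x k j ≤ 1) →
      ∏ k, v k (x k) ^ b k ≤ ∏ k, v k (xstar k) ^ b k)
    (xmi : Fin n → Fin m → ℝ)
    (hxmi_nonneg : ∀ k j, 0 ≤ xmi k j) (hxmi_feas : ∀ j, ∑ k, xmi k j ≤ 1)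
    (hxmi_max : ∀ x : Fin n → Fin m → ℝ,
      (∀ k j, 0 ≤ x k j) → (∀ j, ∑ k, x k j ≤ 1) →
      ∏ k ∈ univ.erase i, v k (x k) ^ b k ≤ ∏ k ∈ univ.erase i, v k (xmi k) ^ b k)
    (hpos : ∀ k, 0 < v k (xstar k))
    (hpos' : ∀ k ∈ univ.erase i, 0 < v k (xmi k))
    -- the approximate PF allocations used by the adapted mechanism
    (xt : Fin n → Fin m → ℝ)
    (hxt_nonneg : ∀ k j, 0 ≤ xt k j) (hxt_feas : ∀ j, ∑ k, xt k j ≤ 1)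
    (hxt_approx : (1 - ε) * ∏ k, v k (xstar k) ^ b k ≤ ∏ k, v k (xt k) ^ b k)
    (xtmi : Fin n → Fin m → ℝ)
    (hxtmi_nonneg : ∀ k j, 0 ≤ xtmi k j) (hxtmi_feas : ∀ j, ∑ k, xtmi k j ≤ 1)
    (hxtmi_pos : 0 < ∏ k ∈ univ.erase i, v k (xtmi k) ^ b k) :
    (1 - ε) * ((1 + b i / ∑ k ∈ univ.erase i, b k)
        ^ (-((∑ k ∈ univ.erase i, b k) / b i))) * v i (xstar i)
      ≤ (min 1 (((∏ k ∈ univ.erase i, v k (xt k) ^ b k) /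
          (∏ k ∈ univ.erase i, v k (xtmi k) ^ b k)) ^ (1 / b i))) * v i (xt i) :=
  stmt_11_general hn i ε hε0 hε1 v b hb hv_nonneg hv_concave hvi_zero xstar hxstar_nonneg
    hxstar_feas hxstar_max xmi hxmi_nonneg hxmi_feas hxmi_max hpos xt hxt_nonneg hxt_feas hxt_approx
    xtmi hxtmi_nonneg hxtmi_feas hxtmi_pos
end

section
/- Suppose each player k has a concave valuation v_k : ℝ^m → ℝ, nonnegative on nonnegative bundles, and let x* be a feasible allocation maximizing Π_k v_k(x_k)^{b_k} over all feasible allocations, with v_k(x*_k) > 0 for every k. Then x* satisfies the Proportional Fairness inequality: for every feasible allocation x', Σ_k b_k·(v_k(x'_k) − v_k(x*_k))/v_k(x*_k) ≤ 0. -/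
/-!
Moving from `x*` towards `x'` along the segment `x_t = (1 - t) x* + t x'` stays feasible, and by
concavity `v_k(x_t) ≥ v_k(x*) (1 + t u_k)` with `u_k` the relative gain of player `k`. Maximality
of the weighted Nash product therefore gives `∑ b_k log (1 + t u_k) ≤ 0` for small `t ≥ 0`. This
function vanishes at `t = 0` with derivative `∑ b_k u_k`, which must then be nonpositive.
-/

open Finset Filter Topology Set

theorem Real.log_prod_rpow {ι : Type*} {s : Finset ι} {y : ι → ℝ} (b : ι → ℝ)
    (hy : ∀ i ∈ s, 0 < y i) : Real.log (∏ i ∈ s, y i ^ b i) = ∑ i ∈ s, b i * Real.log (y i) := by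
  rw [Real.log_prod fun i hi => (Real.rpow_pos_of_pos (hy i hi) _).ne']
  exact sum_congr rfl fun i hi => Real.log_rpow (hy i hi) _

theorem IsLocalMaxOn.hasDerivWithinAt_Ici_nonpos {f : ℝ → ℝ} {f' a : ℝ}
    (h : IsLocalMaxOn f (Ici a) a) (hf : HasDerivWithinAt f f' (Ici a) a) : f' ≤ 0 := by
  have hone : (1 : ℝ) ∈ posTangentConeAt (Ici a) a :=
    mem_posTangentConeAt_of_segment_subset <| by
      rw [segment_eq_Icc (by linarith)]; exact Icc_subset_Ici_self
  simpa using h.hasFDerivWithinAt_nonpos hf.hasFDerivWithinAt hone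

theorem sum_mul_nonpos_of_eventually_sum_mul_log_nonpos {ι : Type*} [Fintype ι] {b u : ι → ℝ}
    (h : ∀ᶠ t in 𝓝[≥] 0, ∑ i, b i * Real.log (1 + t * u i) ≤ 0) : ∑ i, b i * u i ≤ 0 := by
  have hderiv : HasDerivAt (fun t => ∑ i, b i * Real.log (1 + t * u i)) (∑ i, b i * u i) 0 := by
    refine HasDerivAt.fun_sum fun i _ => ?_
    simpa using (((hasDerivAt_id 0).mul_const (u i)).const_add 1).log (by simp) |>.const_mul (b i)
  refine IsLocalMaxOn.hasDerivWithinAt_Ici_nonpos ?_ hderiv.hasDerivWithinAt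
  simpa [IsLocalMaxOn, IsMaxFilter] using h

def feasibleAllocations (ι α : Type*) [Fintype ι] : Set (ι → α → ℝ) :=
  {x | (∀ i j, 0 ≤ x i j) ∧ ∀ j, ∑ i, x i j ≤ 1}

theorem convex_feasibleAllocations (ι α : Type*) [Fintype ι] :
    Convex ℝ (feasibleAllocations ι α) := by
  rintro x ⟨hx0, hx1⟩ y ⟨hy0, hy1⟩ a c ha hc hac
  refine ⟨fun i j => ?_, fun j => ?_⟩
  · simp only [Pi.add_apply, Pi.smul_apply, smul_eq_mul]
    have := hx0 i j; have := hy0 i j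
    positivity
  · simp only [Pi.add_apply, Pi.smul_apply, smul_eq_mul, sum_add_distrib, ← mul_sum]
    linarith [mul_le_mul_of_nonneg_left (hx1 j) ha, mul_le_mul_of_nonneg_left (hy1 j) hc]

section NashProduct

variable {ι E : Type*} [Fintype ι] [AddCommGroup E] [Module ℝ E]
  {S : Set (ι → E)} {v : ι → E → ℝ} {b : ι → ℝ} {xstar x : ι → E}

theorem sum_mul_log_segment_le_of_isMaxOn_prod (hS : Convex ℝ S) (hb : ∀ i, 0 ≤ b i)
    (hv : ∀ i, ConcaveOn ℝ univ (v i))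
    (hmax : IsMaxOn (fun y => ∏ i, v i (y i) ^ b i) S xstar) (hxstar : xstar ∈ S)
    (hpos : ∀ i, 0 < v i (xstar i)) (hx : x ∈ S) {t : ℝ} (ht : t ∈ Icc (0 : ℝ) 1)
    (hseg : ∀ i, 0 < (1 - t) * v i (xstar i) + t * v i (x i)) :
    ∑ i, b i * Real.log ((1 - t) * v i (xstar i) + t * v i (x i)) ≤
      ∑ i, b i * Real.log (v i (xstar i)) := by
  set xt := (1 - t) • xstar + t • x
  have hxt : xt ∈ S := hS hxstar hx (by linarith [ht.2]) ht.1 (by ring)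
  have hconc : ∀ i, (1 - t) * v i (xstar i) + t * v i (x i) ≤ v i (xt i) := fun i =>
    (hv i).2 (mem_univ _) (mem_univ _) (by linarith [ht.2]) ht.1 (by ring)
  have hxt_pos : ∀ i, 0 < v i (xt i) := fun i => (hseg i).trans_le (hconc i)
  calc ∑ i, b i * Real.log ((1 - t) * v i (xstar i) + t * v i (x i))
      ≤ ∑ i, b i * Real.log (v i (xt i)) := sum_le_sum fun i _ =>
        mul_le_mul_of_nonneg_left (Real.log_le_log (hseg i) (hconc i)) (hb i)
    _ = Real.log (∏ i, v i (xt i) ^ b i) := (Real.log_prod_rpow b fun i _ => hxt_pos i).symm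
    _ ≤ Real.log (∏ i, v i (xstar i) ^ b i) :=
        Real.log_le_log (prod_pos fun i _ => Real.rpow_pos_of_pos (hxt_pos i) _) (hmax hxt)
    _ = ∑ i, b i * Real.log (v i (xstar i)) := Real.log_prod_rpow b fun i _ => hpos i

theorem sum_mul_relative_gain_nonpos_of_isMaxOn_prod (hS : Convex ℝ S) (hb : ∀ i, 0 ≤ b i)
    (hv : ∀ i, ConcaveOn ℝ univ (v i))
    (hmax : IsMaxOn (fun y => ∏ i, v i (y i) ^ b i) S xstar) (hxstar : xstar ∈ S)
    (hpos : ∀ i, 0 < v i (xstar i)) (hx : x ∈ S) :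
    ∑ i, b i * (v i (x i) - v i (xstar i)) / v i (xstar i) ≤ 0 := by
  set u : ι → ℝ := fun i => (v i (x i) - v i (xstar i)) / v i (xstar i)
  have hsplit : ∀ t i, (1 - t) * v i (xstar i) + t * v i (x i) = v i (xstar i) * (1 + t * u i) :=
    fun t i => by simp only [u]; field_simp [(hpos i).ne']; ring
  have hnear : ∀ᶠ t in 𝓝 (0 : ℝ), ∀ i, 0 < 1 + t * u i :=
    eventually_all.2 fun i => (Continuous.tendsto (by fun_prop) 0).eventually_const_lt
      (by simp : (0 : ℝ) < 1 + 0 * u i)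
  have hlog : ∀ᶠ t in 𝓝[≥] 0, ∑ i, b i * Real.log (1 + t * u i) ≤ 0 := by
    filter_upwards [Icc_mem_nhdsGE zero_lt_one, nhdsWithin_le_nhds hnear] with t ht hu
    have hseg := sum_mul_log_segment_le_of_isMaxOn_prod hS hb hv hmax hxstar hpos hx ht
      fun i => hsplit t i ▸ mul_pos (hpos i) (hu i)
    have hlog_split : ∀ i, Real.log ((1 - t) * v i (xstar i) + t * v i (x i)) =
        Real.log (v i (xstar i)) + Real.log (1 + t * u i) := fun i => by
      rw [hsplit, Real.log_mul (hpos i).ne' (hu i).ne']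
    simp only [hlog_split, mul_add, sum_add_distrib] at hseg
    linarith
  simpa only [mul_div_assoc] using sum_mul_nonpos_of_eventually_sum_mul_log_nonpos hlog

end NashProduct

theorem stmt_14_general {n m : ℕ}
    (v : Fin n → (Fin m → ℝ) → ℝ) (b : Fin n → ℝ)
    (hb : ∀ k, 1 ≤ b k)
    (hv_concave : ∀ k, ConcaveOn ℝ Set.univ (v k))
    (xstar : Fin n → Fin m → ℝ)
    (hxstar_nonneg : ∀ k j, 0 ≤ xstar k j) (hxstar_feas : ∀ j, ∑ k, xstar k j ≤ 1)
    (hxstar_max : ∀ x : Fin n → Fin m → ℝ,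
      (∀ k j, 0 ≤ x k j) → (∀ j, ∑ k, x k j ≤ 1) →
      ∏ k, v k (x k) ^ b k ≤ ∏ k, v k (xstar k) ^ b k)
    (hpos : ∀ k, 0 < v k (xstar k)) :
    ∀ x' : Fin n → Fin m → ℝ,
      (∀ k j, 0 ≤ x' k j) → (∀ j, ∑ k, x' k j ≤ 1) →
      ∑ k, b k * (v k (x' k) - v k (xstar k)) / v k (xstar k) ≤ 0 := fun _ hx'_nonneg hx'_feas =>
  sum_mul_relative_gain_nonpos_of_isMaxOn_prod (convex_feasibleAllocations _ _)
    (fun k => zero_le_one.trans (hb k)) hv_concave (fun x hx => hxstar_max x hx.1 hx.2)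
    ⟨hxstar_nonneg, hxstar_feas⟩ hpos ⟨hx'_nonneg, hx'_feas⟩

/-- A maximizer of the weighted Nash product over the (convex) set of
feasible allocations satisfies the Proportional Fairness inequality: for every feasible
allocation `x'`, `∑_k b_k·(v_k(x'_k) − v_k(x*_k))/v_k(x*_k) ≤ 0`. -/
theorem stmt_14 {n m : ℕ}
    (v : Fin n → (Fin m → ℝ) → ℝ) (b : Fin n → ℝ)
    (hb : ∀ k, 1 ≤ b k)
    (hv_nonneg : ∀ k (y : Fin m → ℝ), (∀ j, 0 ≤ y j) → 0 ≤ v k y)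
    (hv_concave : ∀ k, ConcaveOn ℝ Set.univ (v k))
    (xstar : Fin n → Fin m → ℝ)
    (hxstar_nonneg : ∀ k j, 0 ≤ xstar k j) (hxstar_feas : ∀ j, ∑ k, xstar k j ≤ 1)
    (hxstar_max : ∀ x : Fin n → Fin m → ℝ,
      (∀ k j, 0 ≤ x k j) → (∀ j, ∑ k, x k j ≤ 1) →
      ∏ k, v k (x k) ^ b k ≤ ∏ k, v k (xstar k) ^ b k)
    (hpos : ∀ k, 0 < v k (xstar k)) :
    ∀ x' : Fin n → Fin m → ℝ,
      (∀ k j, 0 ≤ x' k j) → (∀ j, ∑ k, x' k j ≤ 1) →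
      ∑ k, b k * (v k (x' k) - v k (xstar k)) / v k (xstar k) ≤ 0 :=
  stmt_14_general v b hb hv_concave xstar hxstar_nonneg hxstar_feas hxstar_max hpos
end
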